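/- Positivity of relative entropy with equality case: if ζ₁ and ζ₂ are positive definite n×n complex matrices with tr(ζ₁) = tr(ζ₂), then S(ζ₁|ζ₂) ≥ 0, and S(ζ₁|ζ₂) = 0 if and only if ζ₁ = ζ₂. -/

import Mathlib

open Matrix Kronecker ComplexOrder

/-- Logarithm of a matrix, defined via the spectral theorem for Hermitian matrices
(junk value `0` on non-Hermitian matrices).  Since `Real.log 0 = 0`, for a positive
semidefinite matrix this is the logarithm taken on the support, with the convention
`log 0 = 0` on the kernel. -/
noncomputable def mlog {n : Type*} [Fintype n] [DecidableEq n] (A : Matrix n n ℂ) :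
    Matrix n n ℂ :=
  if hA : A.IsHermitian then
    (hA.eigenvectorUnitary : Matrix n n ℂ) *
      Matrix.diagonal (fun i => (Real.log (hA.eigenvalues i) : ℂ)) *
      (star hA.eigenvectorUnitary : Matrix n n ℂ)
  else 0

/-- von Neumann entropy `S(ρ) = -tr(ρ log ρ)`. -/
noncomputable def vnEnt {n : Type*} [Fintype n] [DecidableEq n] (ρ : Matrix n n ℂ) : ℝ :=
  -(Matrix.trace (ρ * mlog ρ)).re

/-- Relative entropy `S(ζ₁|ζ₂) = tr(ζ₁ (log ζ₁ - log ζ₂))`. -/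
noncomputable def relEnt {n : Type*} [Fintype n] [DecidableEq n] (ζ₁ ζ₂ : Matrix n n ℂ) : ℝ :=
  (Matrix.trace (ζ₁ * (mlog ζ₁ - mlog ζ₂))).re

/-- A density matrix: positive semidefinite with unit trace. -/
def IsDensityMatrix {n : Type*} [Fintype n] [DecidableEq n] (ρ : Matrix n n ℂ) : Prop :=
  ρ.PosSemidef ∧ ρ.trace = 1

/-- Partial trace over the reservoir (second) factor:
`(tr_R M)_{ij} = Σ_k M_{(i,k),(j,k)}`. -/
noncomputable def ptraceR {dS dR : ℕ} (M : Matrix (Fin dS × Fin dR) (Fin dS × Fin dR) ℂ) :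
    Matrix (Fin dS) (Fin dS) ℂ :=
  Matrix.of fun i j => ∑ k, M (i, k) (j, k)

/-- Partial trace over the system (first) factor:
`(tr_S M)_{kl} = Σ_i M_{(i,k),(i,l)}`. -/
noncomputable def ptraceS {dS dR : ℕ} (M : Matrix (Fin dS × Fin dR) (Fin dS × Fin dR) ℂ) :
    Matrix (Fin dR) (Fin dR) ℂ :=
  Matrix.of fun k l => ∑ i, M (i, k) (i, l)

/-- The Gibbs state `e^{-βH}/tr(e^{-βH})` at inverse temperature `β`. -/
noncomputable def gibbs {dR : ℕ} (β : ℝ) (H : Matrix (Fin dR) (Fin dR) ℂ) :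
    Matrix (Fin dR) (Fin dR) ℂ :=
  (Matrix.trace (NormedSpace.exp ((-β : ℂ) • H)))⁻¹ • NormedSpace.exp ((-β : ℂ) • H)

/-- The positive semidefinite square root of a positive semidefinite matrix (the definition of
`Matrix.PosSemidef.sqrt` in the older Mathlib, which no longer provides it). -/
noncomputable def Matrix.PosSemidef.sqrt {n 𝕜 : Type*} [Fintype n] [RCLike 𝕜] [DecidableEq n]
    {A : Matrix n n 𝕜} (hA : Matrix.PosSemidef A) : Matrix n n 𝕜 :=
  hA.1.eigenvectorUnitary.1 * Matrix.diagonal ((↑) ∘ (fun x : ℝ => Real.sqrt x) ∘ hA.1.eigenvalues) *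
    (star hA.1.eigenvectorUnitary : Matrix n n 𝕜)

/-- The trace norm `‖X‖₁ = tr((X*X)^{1/2})`. -/
noncomputable def traceNorm {n : Type*} [Fintype n] [DecidableEq n] (X : Matrix n n ℂ) : ℝ :=
  (Matrix.trace (Matrix.posSemidef_conjTranspose_mul_self X).sqrt).re


/-! Klein's inequality. Diagonalise `ζ₁ = U diag(λ) U*` and `ζ₂ = V diag(μ) V*` and put
`W = U* V`. Since `W` is unitary, `p i j = |W i j|²` is doubly stochastic, and with
`klFun x = x log x + 1 - x` this turns the relative entropy into
`∑ i j, p i j * (μ j * klFun (λ i / μ j)) + (tr ζ₁ - tr ζ₂)`. Every term is nonnegative because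
`klFun ≥ 0` with equality only at `1`. If the sum vanishes, then `λ i = μ j` whenever
`W i j ≠ 0`, i.e. `diag(λ) W = W diag(μ)`, and hence `ζ₁ = U W diag(μ) W* U* = ζ₂`. -/

open InformationTheory

lemma mul_klFun_div {x y : ℝ} (hx : 0 < x) (hy : 0 < y) :
    y * klFun (x / y) = x * Real.log x - x * Real.log y + (y - x) := by
  rw [klFun_apply, Real.log_div hx.ne' hy.ne']
  field_simp
  ring

lemma mul_klFun_div_nonneg {x y : ℝ} (hx : 0 ≤ x) (hy : 0 ≤ y) : 0 ≤ y * klFun (x / y) :=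
  mul_nonneg hy (klFun_nonneg (div_nonneg hx hy))

lemma mul_klFun_div_eq_zero_iff {x y : ℝ} (hx : 0 ≤ x) (hy : 0 < y) :
    y * klFun (x / y) = 0 ↔ x = y := by
  rw [mul_eq_zero, klFun_eq_zero_iff (div_nonneg hx hy.le), div_eq_one_iff_eq hy.ne',
    or_iff_right hy.ne']

namespace Matrix

variable {n : Type*} [Fintype n] [DecidableEq n]

lemma normSq_mem_doublyStochastic (U : unitaryGroup n ℂ) :
    of (fun i j => Complex.normSq ((U : Matrix n n ℂ) i j)) ∈ doublyStochastic ℝ n := by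
  refine mem_doublyStochastic_iff_sum.2
    ⟨fun i j => Complex.normSq_nonneg _, fun i => ?_, fun j => ?_⟩
  · simpa [mul_apply, Complex.mul_conj] using
      congrArg (fun X => (X i i).re) (mem_unitaryGroup_iff.1 U.2)
  · simpa [mul_apply, Complex.normSq_apply] using
      congrArg (fun X => (X j j).re) (mem_unitaryGroup_iff'.1 U.2)

lemma sum_mul_klFun_div_of_mem_doublyStochastic {p : Matrix n n ℝ}
    (hp : p ∈ doublyStochastic ℝ n) {x y : n → ℝ} (hx : ∀ i, 0 < x i) (hy : ∀ j, 0 < y j) :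
    ∑ i, ∑ j, p i j * (y j * klFun (x i / y j)) =
      ∑ i, x i * Real.log (x i) - ∑ i, ∑ j, p i j * (x i * Real.log (y j)) +
        (∑ j, y j - ∑ i, x i) := by
  have hrow (f : n → ℝ) : ∑ i, ∑ j, p i j * f i = ∑ i, f i := by
    simp [← Finset.sum_mul, sum_row_of_mem_doublyStochastic hp]
  have hcol (f : n → ℝ) : ∑ i, ∑ j, p i j * f j = ∑ j, f j := by
    rw [Finset.sum_comm]
    simp [← Finset.sum_mul, sum_col_of_mem_doublyStochastic hp]
  simp only [mul_klFun_div (hx _) (hy _), mul_add, mul_sub, Finset.sum_add_distrib,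
    Finset.sum_sub_distrib, hrow, hcol]

lemma trace_diagonal_mul_conj_diagonal (W : Matrix n n ℂ) (d g : n → ℝ) :
    trace (diagonal (fun i => (d i : ℂ)) * (W * diagonal (fun j => (g j : ℂ)) * star W)) =
      ((∑ i, ∑ j, Complex.normSq (W i j) * (d i * g j) : ℝ) : ℂ) := by
  push_cast
  refine Finset.sum_congr rfl fun i _ => ?_
  rw [diag_apply, diagonal_mul, mul_apply, Finset.mul_sum]
  refine Finset.sum_congr rfl fun j _ => ?_
  rw [mul_diagonal, star_apply, Complex.normSq_eq_conj_mul_self, RCLike.star_def]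
  ring

namespace IsHermitian

variable {A B : Matrix n n ℂ}

noncomputable abbrev eigenOverlap (hA : A.IsHermitian) (hB : B.IsHermitian) : unitaryGroup n ℂ :=
  star hA.eigenvectorUnitary * hB.eigenvectorUnitary

lemma trace_mul_conj_diagonal (hA : A.IsHermitian) (V : unitaryGroup n ℂ) (g : n → ℝ) :
    trace (A * ((V : Matrix n n ℂ) * diagonal (fun j => (g j : ℂ)) * star (V : Matrix n n ℂ))) =
      ((∑ i, ∑ j, Complex.normSq ((star hA.eigenvectorUnitary * V : unitaryGroup n ℂ) i j) *
        (hA.eigenvalues i * g j) : ℝ) : ℂ) := by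
  set U := hA.eigenvectorUnitary
  set W := star U * V
  have hV : (V : Matrix n n ℂ) = U * W := by simp [W, ← mul_assoc]
  have hconj : A * ((V : Matrix n n ℂ) * diagonal (fun j => (g j : ℂ)) * star (V : Matrix n n ℂ)) =
      Unitary.conjStarAlgAut ℂ _ U (diagonal (fun i => (hA.eigenvalues i : ℂ)) *
        ((W : Matrix n n ℂ) * diagonal (fun j => (g j : ℂ)) * star (W : Matrix n n ℂ))) := by
    conv_lhs => rw [hA.spectral_theorem]
    rw [map_mul, hV, Unitary.conjStarAlgAut_apply U (W * _ * _), star_mul]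
    simp only [mul_assoc]
    rfl
  rw [hconj, Unitary.conjStarAlgAut_apply, trace_mul_cycle, Unitary.coe_star_mul_self, one_mul,
    trace_diagonal_mul_conj_diagonal]

lemma re_trace_mul_mlog (hA : A.IsHermitian) (hB : B.IsHermitian) :
    (trace (A * mlog B)).re = ∑ i, ∑ j, Complex.normSq (eigenOverlap hA hB i j) *
      (hA.eigenvalues i * Real.log (hB.eigenvalues j)) := by
  rw [mlog, dif_pos hB, trace_mul_conj_diagonal hA, Complex.ofReal_re]

lemma re_trace_mul_mlog_self (hA : A.IsHermitian) :
    (trace (A * mlog A)).re = ∑ i, hA.eigenvalues i * Real.log (hA.eigenvalues i) := by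
  simp [re_trace_mul_mlog hA hA, one_apply, apply_ite]

lemma eq_of_eigenOverlap_ne_zero (hA : A.IsHermitian) (hB : B.IsHermitian)
    (h : ∀ i j, eigenOverlap hA hB i j ≠ 0 → hA.eigenvalues i = hB.eigenvalues j) : A = B := by
  set W : Matrix n n ℂ := (eigenOverlap hA hB : Matrix n n ℂ)
  set D₁ : Matrix n n ℂ := diagonal (RCLike.ofReal ∘ hA.eigenvalues)
  set D₂ : Matrix n n ℂ := diagonal (RCLike.ofReal ∘ hB.eigenvalues)
  have hintertwine : D₁ * W = W * D₂ := by
    ext i j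
    rw [diagonal_mul, mul_diagonal]
    by_cases hW : W i j = 0
    · simp [hW]
    · simp [h i j hW, mul_comm]
  have hWW : W * star W = 1 := Unitary.coe_mul_star_self _
  have hV : (hB.eigenvectorUnitary : Matrix n n ℂ) = hA.eigenvectorUnitary * W := by
    simp [W, ← mul_assoc]
  conv_lhs => rw [hA.spectral_theorem]
  conv_rhs => rw [hB.spectral_theorem]
  rw [Unitary.conjStarAlgAut_apply, Unitary.conjStarAlgAut_apply, hV, star_mul]
  calc _ = (hA.eigenvectorUnitary : Matrix n n ℂ) * (D₁ * W * star W) *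
        star (hA.eigenvectorUnitary : Matrix n n ℂ) := by rw [mul_assoc D₁, hWW, mul_one]
    _ = _ := by rw [hintertwine]; simp only [mul_assoc]; rfl

end IsHermitian

end Matrix

open Matrix

lemma relEnt_eq_sum_klFun {n : Type*} [Fintype n] [DecidableEq n] {A B : Matrix n n ℂ}
    (hA : A.PosDef) (hB : B.PosDef) (htr : A.trace = B.trace) :
    relEnt A B = ∑ i, ∑ j, Complex.normSq (hA.1.eigenOverlap hB.1 i j) *
      (hB.1.eigenvalues j * klFun (hA.1.eigenvalues i / hB.1.eigenvalues j)) := by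
  have hsum : ∑ i, hA.1.eigenvalues i = ∑ j, hB.1.eigenvalues j := by
    simpa [hA.1.trace_eq_sum_eigenvalues, hB.1.trace_eq_sum_eigenvalues] using
      congrArg Complex.re htr
  have hklein := sum_mul_klFun_div_of_mem_doublyStochastic
    (normSq_mem_doublyStochastic (hA.1.eigenOverlap hB.1)) hA.eigenvalues_pos hB.eigenvalues_pos
  simp only [of_apply] at hklein
  rw [hklein, hsum, sub_self, add_zero, relEnt, mul_sub, trace_sub, Complex.sub_re,
    hA.1.re_trace_mul_mlog_self, hA.1.re_trace_mul_mlog hB.1]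

/-- **Positivity of relative entropy with equality case.**
If `ζ₁` and `ζ₂` are positive definite matrices with equal traces, then
`S(ζ₁|ζ₂) ≥ 0`, and `S(ζ₁|ζ₂) = 0` iff `ζ₁ = ζ₂`. -/
theorem relEnt_nonneg_and_eq_zero_iff {n : ℕ}
    (ζ₁ ζ₂ : Matrix (Fin n) (Fin n) ℂ)
    (h₁ : ζ₁.PosDef) (h₂ : ζ₂.PosDef) (htr : ζ₁.trace = ζ₂.trace) :
    0 ≤ relEnt ζ₁ ζ₂ ∧ (relEnt ζ₁ ζ₂ = 0 ↔ ζ₁ = ζ₂) := by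
  have hS := relEnt_eq_sum_klFun h₁ h₂ htr
  have hterm (i j) : 0 ≤ Complex.normSq (h₁.1.eigenOverlap h₂.1 i j) *
      (h₂.1.eigenvalues j * klFun (h₁.1.eigenvalues i / h₂.1.eigenvalues j)) :=
    mul_nonneg (Complex.normSq_nonneg _) <|
      mul_klFun_div_nonneg (h₁.eigenvalues_pos i).le (h₂.eigenvalues_pos j).le
  refine ⟨hS ▸ Finset.sum_nonneg fun i _ => Finset.sum_nonneg fun j _ => hterm i j,
    fun h0 => ?_, by rintro rfl; simp [relEnt]⟩
  refine h₁.1.eq_of_eigenOverlap_ne_zero h₂.1 fun i j hW => ?_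
  rw [hS, ← Fintype.sum_prod_type', Fintype.sum_eq_zero_iff_of_nonneg fun x => hterm x.1 x.2] at h0
  have hzero := congrFun h0 (i, j)
  rwa [Pi.zero_apply, mul_eq_zero, Complex.normSq_eq_zero, or_iff_right hW,
    mul_klFun_div_eq_zero_iff (h₁.eigenvalues_pos i).le (h₂.eigenvalues_pos j)] at hzero
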